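/- Fix reals 0 ≤ a_r < b_r and a_f < b_f ≤ 1, and let σ_r = σ(·; a_r, b_r) and σ_f = σ(·; a_f, b_f) be the corresponding C¹ transition functions. Let e₁ ∈ ℝ³ be the first standard basis vector. Then the weight function w(p_i, p_j, p_k, R) = ‖p_j − p_i‖·‖p_k − p_i‖·(1 − σ_r(‖p_j − p_i‖))·σ_f(⟨(p_j − p_i)/‖p_j − p_i‖, R e₁⟩)·(1 − σ_r(‖p_k − p_i‖))·σ_f(⟨(p_k − p_i)/‖p_k − p_i‖, R e₁⟩), viewed as a function of (p_i, p_j, p_k, R) ∈ ℝ³ × ℝ³ × ℝ³ × Matrix(3,3,ℝ), is continuously differentiable on the open set where p_j ≠ p_i and p_k ≠ p_i. -/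

import Mathlib

/-! The transition `σ(·; a, b)` is the cosine ramp `x ↦ (1 − cos(π(x − a)/(b − a)))/2` composed
with the clamp `x ↦ max a (min b x)`. The clamp has kinks at `a` and `b`, but the ramp's derivative
vanishes exactly there, so the composite is `C¹`. The weight is a product of two edge factors
`d (1 − σ_r(d)) σ_f(⟨v/d, R e₁⟩)` with `v = p_j − p_i`, `d = ‖v‖`, and each is a composition of
`C¹` maps wherever `v ≠ 0`, since there the norm is smooth and nonzero. -/

open scoped RealInnerProductSpace

noncomputable section

attribute [local instance] Matrix.normedAddCommGroup Matrix.normedSpace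

abbrev E3 := EuclideanSpace ℝ (Fin 3)

/-- The smooth transition function `σ(·; a, b)`. -/
def transition (a b : ℝ) (x : ℝ) : ℝ :=
  if x < a then 0
  else if x ≤ b then (1 - Real.cos (Real.pi * (x - a) / (b - a))) / 2
  else 1

/-- The angle weight
`w(p_i, p_j, p_k, R) = d_ij d_ik (1 − σ_r(d_ij)) σ_f(ζ_ij) (1 − σ_r(d_ik)) σ_f(ζ_ik)`,
where `d_il = ‖p_l − p_i‖` and `ζ_il = ⟨(p_l − p_i)/d_il, R e₁⟩`. -/
def angleWeight (ar br af bf : ℝ)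
    (q : E3 × E3 × E3 × Matrix (Fin 3) (Fin 3) ℝ) : ℝ :=
  let pi' := q.1
  let pj := q.2.1
  let pk := q.2.2.1
  let R := q.2.2.2
  let e₁ : Fin 3 → ℝ := ![1, 0, 0]
  let axis : E3 := (EuclideanSpace.equiv (Fin 3) ℝ).symm (R.mulVec e₁)
  ‖pj - pi'‖ * ‖pk - pi'‖ *
    ((1 - transition ar br ‖pj - pi'‖) *
      transition af bf ⟪‖pj - pi'‖⁻¹ • (pj - pi'), axis⟫ *
      (1 - transition ar br ‖pk - pi'‖) *
      transition af bf ⟪‖pk - pi'‖⁻¹ • (pk - pi'), axis⟫)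

open Real Topology

section Clamp

variable {E : Type*} [NormedAddCommGroup E] [NormedSpace ℝ E] {g g' : ℝ → E}

theorem hasDerivAt_comp_max_of_deriv_eq_zero (hg : ∀ x, HasDerivAt g (g' x) x)
    (hg' : Continuous g') {a : ℝ} (ha : g' a = 0) (x : ℝ) :
    HasDerivAt (fun x => g (max a x)) (g' (max a x)) x := by
  refine hasDerivAt_of_hasDerivAt_of_ne' (g := fun x => g' (max a x)) (x := a) (fun y hy => ?_) ?_
    (hg'.comp (continuous_const.max continuous_id)).continuousAt x
  · rcases hy.lt_or_gt with hy | hy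
    · have hconst : (fun x => g (max a x)) =ᶠ[𝓝 y] fun _ => g a := by
        filter_upwards [Iio_mem_nhds hy] with z hz
        rw [max_eq_left hz.le]
      rw [max_eq_left hy.le, ha]
      exact (hasDerivAt_const y _).congr_of_eventuallyEq hconst
    · have hid : (fun x => g (max a x)) =ᶠ[𝓝 y] g := by
        filter_upwards [Ioi_mem_nhds hy] with z hz
        rw [max_eq_right hz.le]
      rw [max_eq_right hy.le]
      exact (hg y).congr_of_eventuallyEq hid
  · exact (hg (max a a)).continuousAt.comp (continuous_const.max continuous_id).continuousAt

theorem hasDerivAt_comp_min_of_deriv_eq_zero (hg : ∀ x, HasDerivAt g (g' x) x)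
    (hg' : Continuous g') {b : ℝ} (hb : g' b = 0) (x : ℝ) :
    HasDerivAt (fun x => g (min b x)) (g' (min b x)) x := by
  refine hasDerivAt_of_hasDerivAt_of_ne' (g := fun x => g' (min b x)) (x := b) (fun y hy => ?_) ?_
    (hg'.comp (continuous_const.min continuous_id)).continuousAt x
  · rcases hy.lt_or_gt with hy | hy
    · have hid : (fun x => g (min b x)) =ᶠ[𝓝 y] g := by
        filter_upwards [Iio_mem_nhds hy] with z hz
        rw [min_eq_right hz.le]
      rw [min_eq_right hy.le]
      exact (hg y).congr_of_eventuallyEq hid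
    · have hconst : (fun x => g (min b x)) =ᶠ[𝓝 y] fun _ => g b := by
        filter_upwards [Ioi_mem_nhds hy] with z hz
        rw [min_eq_left hz.le]
      rw [min_eq_left hy.le, hb]
      exact (hasDerivAt_const y _).congr_of_eventuallyEq hconst
  · exact (hg (min b b)).continuousAt.comp (continuous_const.min continuous_id).continuousAt

theorem contDiff_one_comp_clamp_of_deriv_eq_zero (hg : ∀ x, HasDerivAt g (g' x) x)
    (hg' : Continuous g') {a b : ℝ} (hab : a ≤ b) (ha : g' a = 0) (hb : g' b = 0) :
    ContDiff ℝ 1 fun x => g (max a (min b x)) := by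
  have hmax := hasDerivAt_comp_max_of_deriv_eq_zero hg hg' ha
  have hclamp := hasDerivAt_comp_min_of_deriv_eq_zero hmax
    (hg'.comp (continuous_const.max continuous_id)) (b := b) (by simpa [max_eq_right hab] using hb)
  refine contDiff_one_iff_deriv.2 ⟨fun x => (hclamp x).differentiableAt, ?_⟩
  rw [deriv_eq hclamp]
  fun_prop

end Clamp

theorem transition_eq_cos_clamp {a b : ℝ} (hab : a < b) (x : ℝ) :
    transition a b x = (1 - cos (π * (max a (min b x) - a) / (b - a))) / 2 := by
  unfold transition
  split_ifs with hxa hxb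
  · simp [max_eq_left ((min_le_right b x).trans hxa.le)]
  · rw [min_eq_right hxb, max_eq_right (not_lt.1 hxa)]
  · rw [min_eq_left (not_le.1 hxb).le, max_eq_right hab.le, mul_div_assoc,
      div_self (sub_pos.2 hab).ne', mul_one, cos_pi]
    norm_num

theorem hasDerivAt_one_sub_cos_div_two (a b x : ℝ) :
    HasDerivAt (fun x => (1 - cos (π * (x - a) / (b - a))) / 2)
      (π / (b - a) / 2 * sin (π * (x - a) / (b - a))) x := by
  have hlin : HasDerivAt (fun x => π * (x - a) / (b - a)) (π / (b - a)) x := by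
    simpa using (((hasDerivAt_id x).sub_const a).const_mul π).div_const (b - a)
  exact ((hlin.cos.const_sub 1).div_const 2).congr_deriv (by ring)

theorem contDiff_transition {a b : ℝ} (hab : a < b) : ContDiff ℝ 1 (transition a b) := by
  have hba : b - a ≠ 0 := (sub_pos.2 hab).ne'
  rw [funext (transition_eq_cos_clamp hab)]
  refine contDiff_one_comp_clamp_of_deriv_eq_zero (hasDerivAt_one_sub_cos_div_two a b)
    (by fun_prop) hab.le (by simp) ?_
  rw [mul_div_assoc, div_self hba, mul_one, sin_pi, mul_zero]

theorem contDiff_matrix_mulVec {m n : Type*} [Fintype m] [Fintype n] {k : WithTop ℕ∞}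
    (v : n → ℝ) : ContDiff ℝ k fun R : Matrix m n ℝ => R.mulVec v :=
  (LinearMap.toContinuousLinearMap
    { toFun := fun R : Matrix m n ℝ => R.mulVec v, map_add' := fun _ _ => Matrix.add_mulVec _ _ _
      map_smul' := fun _ _ => Matrix.smul_mulVec _ _ _ }).contDiff

/-- The edge factor `d_ij (1 − σ_r(d_ij)) σ_f(ζ_ij)` of the angle weight, as a function of
`v = p_j − p_i` and of the optical axis `u = R e₁`. -/
def edgeWeight {F : Type*} [NormedAddCommGroup F] [InnerProductSpace ℝ F]
    (ar br af bf : ℝ) (v u : F) : ℝ :=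
  ‖v‖ * (1 - transition ar br ‖v‖) * transition af bf ⟪‖v‖⁻¹ • v, u⟫

theorem ContDiffAt.edgeWeight {F X : Type*} [NormedAddCommGroup F] [InnerProductSpace ℝ F]
    [NormedAddCommGroup X] [NormedSpace ℝ X] {ar br af bf : ℝ} (hr : ar < br) (hf : af < bf)
    {f g : X → F} {x : X} (hfx : ContDiffAt ℝ 1 f x) (hgx : ContDiffAt ℝ 1 g x) (h0 : f x ≠ 0) :
    ContDiffAt ℝ 1 (fun y => edgeWeight ar br af bf (f y) (g y)) x := by
  have hnorm := hfx.norm ℝ h0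
  have hbearing := (hnorm.inv (norm_ne_zero_iff.2 h0)).smul hfx
  exact (hnorm.mul (contDiffAt_const.sub ((contDiff_transition hr).contDiffAt.comp x hnorm))).mul
    ((contDiff_transition hf).contDiffAt.comp x (hbearing.inner ℝ hgx))

def opticalAxis (R : Matrix (Fin 3) (Fin 3) ℝ) : E3 :=
  (EuclideanSpace.equiv (Fin 3) ℝ).symm (R.mulVec ![1, 0, 0])

theorem contDiff_opticalAxis {k : WithTop ℕ∞} : ContDiff ℝ k opticalAxis :=
  (EuclideanSpace.equiv (Fin 3) ℝ).symm.contDiff.comp (contDiff_matrix_mulVec _)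

theorem angleWeight_eq_edgeWeight_mul_edgeWeight (ar br af bf : ℝ)
    (q : E3 × E3 × E3 × Matrix (Fin 3) (Fin 3) ℝ) :
    angleWeight ar br af bf q =
      edgeWeight ar br af bf (q.2.1 - q.1) (opticalAxis q.2.2.2) *
        edgeWeight ar br af bf (q.2.2.1 - q.1) (opticalAxis q.2.2.2) := by
  simp only [angleWeight, edgeWeight, opticalAxis]
  ring

theorem angleWeight_contDiffOn_general (ar br af bf : ℝ)
    (hr : ar < br) (hf : af < bf) :
    ContDiffOn ℝ 1 (angleWeight ar br af bf)
      {q : E3 × E3 × E3 × Matrix (Fin 3) (Fin 3) ℝ | q.2.1 ≠ q.1 ∧ q.2.2.1 ≠ q.1} := by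
  rintro q ⟨hj, hk⟩
  have haxis : ContDiffAt ℝ 1 (fun q : E3 × E3 × E3 × Matrix (Fin 3) (Fin 3) ℝ =>
      opticalAxis q.2.2.2) q :=
    (contDiff_opticalAxis.comp (by fun_prop)).contDiffAt
  rw [funext (angleWeight_eq_edgeWeight_mul_edgeWeight ar br af bf)]
  exact ((ContDiffAt.edgeWeight hr hf (by fun_prop) haxis (sub_ne_zero.2 hj)).mul
    (ContDiffAt.edgeWeight hr hf (by fun_prop) haxis (sub_ne_zero.2 hk))).contDiffWithinAt

/-- The angle weight function is continuously differentiable in the poses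
`(p_i, p_j, p_k, R)` on the open collision-free set `{p_j ≠ p_i, p_k ≠ p_i}`. -/
theorem angleWeight_contDiffOn (ar br af bf : ℝ)
    (har : 0 ≤ ar) (hr : ar < br) (hf : af < bf) (hbf : bf ≤ 1) :
    ContDiffOn ℝ 1 (angleWeight ar br af bf)
      {q : E3 × E3 × E3 × Matrix (Fin 3) (Fin 3) ℝ | q.2.1 ≠ q.1 ∧ q.2.2.1 ≠ q.1} :=
  angleWeight_contDiffOn_general ar br af bf hr hf
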